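/- In the FBD-α process, the boundary β_t is non-decreasing in t. -/

import Mathlib

open Real

/-- The mass of `μ` on the half-line `[x, ∞)`. -/
noncomputable def tailMass (μ : ℤ → ℝ) (x : ℤ) : ℝ := ∑' y : {y : ℤ // x ≤ y}, μ y

/-- The boundary `β = sup {x : μ([x,∞)) ≥ α/2}`. -/
noncomputable def bdry (α : ℝ) (μ : ℤ → ℝ) : ℤ := sSup {x : ℤ | α / 2 ≤ tailMass μ x}

/-- The frozen mass: the extreme `α/2` mass on each side of the origin. -/
noncomputable def frozen (α : ℝ) (μ : ℤ → ℝ) : ℤ → ℝ := fun y =>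
  let b := bdry α μ
  let v : ℤ → ℝ := fun w =>
    if b < w then μ w
    else if w = b then α / 2 - ∑' z : {z : ℤ // b < z}, μ z
    else 0
  if 0 ≤ y then v y else v (-y)

/-- The free mass `ν = μ - f`. -/
noncomputable def free (α : ℝ) (μ : ℤ → ℝ) : ℤ → ℝ := fun x => μ x - frozen α μ x

/-- One step of the Frozen-Boundary Diffusion:
`μ_{t+1}(x) = (ν_t(x-1) + ν_t(x+1))/2 + f_t(x)`. -/
noncomputable def FBDstep (α : ℝ) (μ : ℤ → ℝ) : ℤ → ℝ := fun x =>
  (free α μ (x - 1) + free α μ (x + 1)) / 2 + frozen α μ x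

/-- The Frozen-Boundary Diffusion with parameter `α`, started from `μ_0 = δ_0`. -/
noncomputable def FBD (α : ℝ) : ℕ → ℤ → ℝ
  | 0 => fun x => if x = 0 then 1 else 0
  | t + 1 => FBDstep α (FBD α t)

/-!
The frozen mass `f_t` on `[β_t, ∞)` is exactly `α/2` and stays in place under the step, while
the free mass `ν_t = μ_t - f_t ≥ 0` can only add to it; hence `μ_{t+1}([β_t, ∞)) ≥ α/2`, i.e.
`β_t ≤ β_{t+1}`. Nonnegativity of `ν_t` needs `f_t ≤ μ_t`, which holds because every `μ_t` is
symmetric, nonnegative and summable with `μ_t([0, ∞)) ≥ α/2`, so that `β_t ≥ 0` and `f_t` is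
the even extension of its restriction to `[0, ∞)`.
-/

section TailMass

variable {μ ν : ℤ → ℝ}

theorem tailMass_eq_tsum_Ici (μ : ℤ → ℝ) (x : ℤ) : tailMass μ x = ∑' y : Set.Ici x, μ y := rfl

theorem tailMass_add_one_eq_tsum_Ioi (μ : ℤ → ℝ) (x : ℤ) :
    tailMass μ (x + 1) = ∑' y : Set.Ioi x, μ y := rfl

theorem tailMass_congr {x : ℤ} (h : ∀ y, x ≤ y → μ y = ν y) : tailMass μ x = tailMass ν x :=
  tsum_congr fun y => h y y.2

theorem tailMass_mono (h : ∀ y, μ y ≤ ν y) (hμ : Summable μ) (hν : Summable ν) (x : ℤ) :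
    tailMass μ x ≤ tailMass ν x :=
  Summable.tsum_le_tsum (fun y => h y) (hμ.subtype _) (hν.subtype _)

theorem tailMass_eq_add (hμ : Summable μ) (x : ℤ) : tailMass μ x = μ x + tailMass μ (x + 1) := by
  rw [tailMass_eq_tsum_Ici, tailMass_add_one_eq_tsum_Ioi, ← Set.Ioi_insert, ← Set.singleton_union,
    Summable.tsum_union_disjoint (by simp) (hμ.subtype _) (hμ.subtype _), tsum_singleton]

theorem tailMass_antitone (hμ0 : ∀ x, 0 ≤ μ x) (hμ : Summable μ) : Antitone (tailMass μ) :=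
  antitone_int_of_succ_le fun x => by linarith [tailMass_eq_add hμ x, hμ0 x]

theorem bddAbove_setOf_le_tailMass (hμ : Summable μ) {ε : ℝ} (hε : 0 < ε) :
    BddAbove {x | ε ≤ tailMass μ x} := by
  obtain ⟨s, hs⟩ := hμ.tsum_vanishing (Iio_mem_nhds hε)
  obtain ⟨M, hM⟩ := s.exists_le
  refine ⟨M, fun x (hx : ε ≤ tailMass μ x) => ?_⟩
  by_contra! hMx
  have hdisj : Disjoint (Set.Ici x) s :=
    Set.disjoint_left.2 fun y hy hys => by
      have := hM y hys
      simp only [Set.mem_Ici] at hy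
      omega
  exact (hs _ hdisj).not_ge hx

end TailMass

section Boundary

variable {α : ℝ} {μ : ℤ → ℝ}

theorem le_bdry (hμ : Summable μ) (hα : 0 < α) {x : ℤ} (hx : α / 2 ≤ tailMass μ x) :
    x ≤ bdry α μ :=
  le_csSup (bddAbove_setOf_le_tailMass hμ (half_pos hα)) hx

theorem le_tailMass_bdry (hμ : Summable μ) (hα : 0 < α) (h0 : α / 2 ≤ tailMass μ 0) :
    α / 2 ≤ tailMass μ (bdry α μ) :=
  Int.csSup_mem ⟨0, h0⟩ (bddAbove_setOf_le_tailMass hμ (half_pos hα))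

theorem tailMass_bdry_add_one_lt (hμ : Summable μ) (hα : 0 < α) :
    tailMass μ (bdry α μ + 1) < α / 2 :=
  lt_of_not_ge fun h => (le_bdry hμ hα h).not_gt (lt_add_one _)

end Boundary

noncomputable def frozenHalf (α : ℝ) (μ : ℤ → ℝ) (w : ℤ) : ℝ :=
  if bdry α μ < w then μ w
  else if w = bdry α μ then α / 2 - tailMass μ (bdry α μ + 1)
  else 0

theorem frozen_eq_frozenHalf_abs (α : ℝ) (μ : ℤ → ℝ) (y : ℤ) :
    frozen α μ y = frozenHalf α μ |y| := by
  unfold frozen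
  split_ifs with hy
  · rw [abs_of_nonneg hy]; rfl
  · rw [abs_of_neg (not_le.1 hy)]; rfl

theorem frozen_neg (α : ℝ) (μ : ℤ → ℝ) (y : ℤ) : frozen α μ (-y) = frozen α μ y := by
  simp only [frozen_eq_frozenHalf_abs, abs_neg]

theorem free_neg (α : ℝ) {μ : ℤ → ℝ} (hμ : ∀ x, μ (-x) = μ x) (y : ℤ) :
    free α μ (-y) = free α μ y := by
  simp only [free, hμ, frozen_neg]

structure FBDInvariant (α : ℝ) (μ : ℤ → ℝ) : Prop where
  neg : ∀ x, μ (-x) = μ x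
  nonneg : ∀ x, 0 ≤ μ x
  summable : Summable μ
  half_le_tailMass_zero : α / 2 ≤ tailMass μ 0

namespace FBDInvariant

variable {α : ℝ} {μ : ℤ → ℝ}

theorem apply_abs (h : FBDInvariant α μ) (y : ℤ) : μ |y| = μ y := by
  rcases abs_choice y with hy | hy <;> rw [hy]
  exact h.neg y

theorem bdry_nonneg (h : FBDInvariant α μ) (hα : 0 < α) : 0 ≤ bdry α μ :=
  le_bdry h.summable hα h.half_le_tailMass_zero

theorem frozenHalf_nonneg (h : FBDInvariant α μ) (hα : 0 < α) (w : ℤ) :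
    0 ≤ frozenHalf α μ w := by
  have := tailMass_bdry_add_one_lt h.summable hα
  unfold frozenHalf
  split_ifs
  · exact h.nonneg w
  · linarith
  · exact le_rfl

theorem frozenHalf_le (h : FBDInvariant α μ) (hα : 0 < α) (w : ℤ) : frozenHalf α μ w ≤ μ w := by
  have := le_tailMass_bdry h.summable hα h.half_le_tailMass_zero
  rw [tailMass_eq_add h.summable] at this
  unfold frozenHalf
  split_ifs with _ hw
  · exact le_rfl
  · rw [hw]; linarith
  · exact h.nonneg w

theorem frozen_nonneg (h : FBDInvariant α μ) (hα : 0 < α) (y : ℤ) : 0 ≤ frozen α μ y := by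
  rw [frozen_eq_frozenHalf_abs]
  exact h.frozenHalf_nonneg hα _

theorem frozen_le (h : FBDInvariant α μ) (hα : 0 < α) (y : ℤ) : frozen α μ y ≤ μ y := by
  rw [frozen_eq_frozenHalf_abs, ← h.apply_abs]
  exact h.frozenHalf_le hα _

theorem summable_frozen (h : FBDInvariant α μ) (hα : 0 < α) : Summable (frozen α μ) :=
  Summable.of_nonneg_of_le (h.frozen_nonneg hα) (h.frozen_le hα) h.summable

theorem summable_free (h : FBDInvariant α μ) (hα : 0 < α) : Summable (free α μ) :=
  h.summable.sub (h.summable_frozen hα)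

theorem free_nonneg (h : FBDInvariant α μ) (hα : 0 < α) (y : ℤ) : 0 ≤ free α μ y :=
  sub_nonneg.2 (h.frozen_le hα y)

theorem tailMass_frozen_bdry (h : FBDInvariant α μ) (hα : 0 < α) :
    tailMass (frozen α μ) (bdry α μ) = α / 2 := by
  have hβ := h.bdry_nonneg hα
  have hfrozen_bdry : frozen α μ (bdry α μ) = α / 2 - tailMass μ (bdry α μ + 1) := by
    simp [frozen_eq_frozenHalf_abs, abs_of_nonneg hβ, frozenHalf]
  have hfrozen_gt : ∀ y, bdry α μ + 1 ≤ y → frozen α μ y = μ y := fun y hy => by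
    have hy' : bdry α μ < y := hy
    rw [frozen_eq_frozenHalf_abs, abs_of_pos (hβ.trans_lt hy'), frozenHalf, if_pos hy']
  rw [tailMass_eq_add (h.summable_frozen hα), hfrozen_bdry, tailMass_congr hfrozen_gt]
  ring

theorem frozen_le_FBDstep (h : FBDInvariant α μ) (hα : 0 < α) (y : ℤ) :
    frozen α μ y ≤ FBDstep α μ y := by
  have := h.free_nonneg hα (y - 1)
  have := h.free_nonneg hα (y + 1)
  unfold FBDstep
  linarith

theorem summable_FBDstep (h : FBDInvariant α μ) (hα : 0 < α) : Summable (FBDstep α μ) := by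
  have hfree := h.summable_free hα
  have hleft : Summable fun x => free α μ (x - 1) := hfree.comp_injective sub_left_injective
  have hright : Summable fun x => free α μ (x + 1) := hfree.comp_injective (add_left_injective 1)
  exact ((hleft.add hright).div_const 2).add (h.summable_frozen hα)

theorem half_le_tailMass_FBDstep_bdry (h : FBDInvariant α μ) (hα : 0 < α) :
    α / 2 ≤ tailMass (FBDstep α μ) (bdry α μ) :=
  h.tailMass_frozen_bdry hα ▸
    tailMass_mono (h.frozen_le_FBDstep hα) (h.summable_frozen hα) (h.summable_FBDstep hα) _

theorem step (h : FBDInvariant α μ) (hα : 0 < α) : FBDInvariant α (FBDstep α μ) := by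
  have hnonneg y := (h.frozen_nonneg hα y).trans (h.frozen_le_FBDstep hα y)
  refine ⟨fun x => ?_, hnonneg, h.summable_FBDstep hα, ?_⟩
  · simp only [FBDstep, frozen_neg, free_neg α h.neg, show -x - 1 = -(x + 1) by ring,
      show -x + 1 = -(x - 1) by ring]
    ring
  · exact (h.half_le_tailMass_FBDstep_bdry hα).trans
      (tailMass_antitone hnonneg (h.summable_FBDstep hα) (h.bdry_nonneg hα))

theorem bdry_le_bdry_FBDstep (h : FBDInvariant α μ) (hα : 0 < α) :
    bdry α μ ≤ bdry α (FBDstep α μ) :=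
  le_bdry (h.summable_FBDstep hα) hα (h.half_le_tailMass_FBDstep_bdry hα)

end FBDInvariant

theorem fbdInvariant_FBD_zero {α : ℝ} (hα : α ≤ 2) : FBDInvariant α (FBD α 0) := by
  have hsupp : ∀ x ∉ ({0} : Finset ℤ), FBD α 0 x = 0 := fun x hx => by
    simp_all [FBD]
  refine ⟨fun x => by simp [FBD], fun x => by simp only [FBD]; split_ifs <;> norm_num,
    summable_of_ne_finset_zero hsupp, ?_⟩
  have htail : tailMass (FBD α 0) 0 = 1 := by
    rw [tailMass_eq_tsum_Ici, tsum_eq_single (⟨0, Set.self_mem_Ici⟩ : Set.Ici (0 : ℤ))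
      fun y hy => hsupp y (by simpa [Subtype.ext_iff] using hy)]
    simp [FBD]
  rw [htail]
  linarith

theorem fbdInvariant_FBD {α : ℝ} (hα0 : 0 < α) (hα2 : α ≤ 2) (t : ℕ) :
    FBDInvariant α (FBD α t) := by
  induction t with
  | zero => exact fbdInvariant_FBD_zero hα2
  | succ t ih => exact ih.step hα0

/-- In the FBD-α process, the boundary `β_t` is non-decreasing in `t`. -/
theorem stmt12 (α : ℝ) (hα : α ∈ Set.Ioo (0:ℝ) 1) (t : ℕ) :
    bdry α (FBD α t) ≤ bdry α (FBD α (t + 1)) :=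
  (fbdInvariant_FBD hα.1 (by linarith [hα.2]) t).bdry_le_bdry_FBDstep hα.1
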